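/- arXiv:2403.03834 — 6 statements merged into one kernel-verified Lean document; each statement's English description precedes it below -/
import Mathlib

section
/- Let n ≥ 2 be an integer, let A be a symmetric n×n real matrix and let q ∈ ℝⁿ. Then | ‖Aq‖² − (tr A)·⟨Aq, q⟩ − (1/2)(‖A‖² − (tr A)²)·‖q‖² | ≤ ((n−2)/2)·(‖A‖²·‖q‖² − ‖Aq‖²). -/
/-!
Diagonalize `A = U diag(λ) Uᵀ` orthogonally and put `c = Uᵀ q`. Both sides become weighted sums
over `i` with weights `c i ^ 2`, and the inequality reduces to one for each eigenvalue `λ i`: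
with `s` and `Q` the sum and the sum of squares of the other `n - 1` eigenvalues, the left-hand
coefficient is `(s² - Q) / 2` and the right-hand one is `(n - 2) Q / 2`. Cauchy–Schwarz gives
`s² ≤ (n - 1) Q`, and `s² ≥ 0` gives the other side once `n ≥ 3` (for `n ≤ 2`, `s² = Q`).
-/

open Matrix Finset

theorem abs_sq_sum_sub_sum_sq_le {ι : Type*} (s : Finset ι) (f : ι → ℝ) :
    |(∑ i ∈ s, f i) ^ 2 - ∑ i ∈ s, f i ^ 2| ≤ (#s - 1 : ℝ) * ∑ i ∈ s, f i ^ 2 := by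
  have h_cauchy_schwarz : (∑ i ∈ s, f i) ^ 2 ≤ #s * ∑ i ∈ s, f i ^ 2 := sq_sum_le_card_mul_sum_sq
  have h_nonneg : 0 ≤ ∑ i ∈ s, f i ^ 2 := by positivity
  have h_lower : (2 - #s : ℝ) * ∑ i ∈ s, f i ^ 2 ≤ (∑ i ∈ s, f i) ^ 2 := by
    obtain hs | hs := le_or_gt 2 #s
    · have : (2 - #s : ℝ) ≤ 0 := by
        rw [sub_nonpos]
        exact_mod_cast hs
      nlinarith [sq_nonneg (∑ i ∈ s, f i)]
    · obtain hs | hs : #s = 0 ∨ #s = 1 := by omega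
      · simp [card_eq_zero.mp hs]
      · obtain ⟨a, rfl⟩ := card_eq_one.mp hs
        norm_num
  rw [abs_sub_le_iff]
  constructor <;> nlinarith

section EigenvalueInequality

variable {ι : Type*} [Fintype ι] [DecidableEq ι]

theorem abs_sq_sub_sum_mul_sub_le (l : ι → ℝ) (i : ι) :
    |l i ^ 2 - (∑ j, l j) * l i - (1 / 2) * ((∑ j, l j ^ 2) - (∑ j, l j) ^ 2)|
      ≤ (Fintype.card ι - 2 : ℝ) / 2 * ((∑ j, l j ^ 2) - l i ^ 2) := by
  have h_sum : ∑ j, l j = l i + ∑ j ∈ univ.erase i, l j :=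
    (add_sum_erase _ _ (mem_univ i)).symm
  have h_sum_sq : ∑ j, l j ^ 2 = l i ^ 2 + ∑ j ∈ univ.erase i, l j ^ 2 :=
    (add_sum_erase _ (l · ^ 2) (mem_univ i)).symm
  have h_card : (#(univ.erase i) : ℝ) = Fintype.card ι - 1 := by
    rw [cast_card_erase_of_mem (mem_univ i), card_univ]
  have h_others := abs_sq_sum_sub_sum_sq_le (univ.erase i) l
  rw [h_card] at h_others
  rw [h_sum, h_sum_sq]
  calc _ = |(∑ j ∈ univ.erase i, l j) ^ 2 - ∑ j ∈ univ.erase i, l j ^ 2| / 2 := by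
        rw [← abs_two, ← abs_div]
        ring_nf
    _ ≤ _ := by linarith

theorem abs_weighted_sq_sub_sum_mul_sub_le (l w : ι → ℝ) (hw : ∀ i, 0 ≤ w i) :
    |∑ i, l i ^ 2 * w i - (∑ i, l i) * ∑ i, l i * w i
        - (1 / 2) * ((∑ i, l i ^ 2) - (∑ i, l i) ^ 2) * ∑ i, w i|
      ≤ (Fintype.card ι - 2 : ℝ) / 2 * ((∑ i, l i ^ 2) * ∑ i, w i - ∑ i, l i ^ 2 * w i) := by
  set t := ∑ i, l i
  set S := ∑ i, l i ^ 2
  calc _ = |∑ i, (l i ^ 2 - t * l i - (1 / 2) * (S - t ^ 2)) * w i| := by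
        simp only [sub_mul, sum_sub_distrib, mul_sum, mul_assoc]
    _ ≤ ∑ i, |l i ^ 2 - t * l i - (1 / 2) * (S - t ^ 2)| * w i :=
        (abs_sum_le_sum_abs _ _).trans_eq <|
          sum_congr rfl fun i _ ↦ by rw [abs_mul, abs_of_nonneg (hw i)]
    _ ≤ ∑ i, (Fintype.card ι - 2 : ℝ) / 2 * (S - l i ^ 2) * w i := by
        gcongr with i
        · exact hw i
        · exact abs_sq_sub_sum_mul_sub_le l i
    _ = _ := by
        simp only [mul_sub, sub_mul, sum_sub_distrib, mul_sum, mul_assoc]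

end EigenvalueInequality

theorem Matrix.dotProduct_mulVec_mulVec_of_transpose_mul_self {m n : Type*} [Fintype m]
    [Fintype n] [DecidableEq n] {M : Matrix m n ℝ} (hM : Mᵀ * M = 1) (x y : n → ℝ) :
    M *ᵥ x ⬝ᵥ M *ᵥ y = x ⬝ᵥ y := by
  rw [dotProduct_mulVec, vecMul_mulVec, hM, vecMul_one]

section OrthogonalConjugation

variable {ι : Type*} [Fintype ι] [DecidableEq ι]

theorem Matrix.IsSymm.exists_orthogonal_diagonalization {A : Matrix ι ι ℝ} (hA : A.IsSymm) :
    ∃ (U : Matrix ι ι ℝ) (l : ι → ℝ), Uᵀ * U = 1 ∧ U * Uᵀ = 1 ∧ A = U * diagonal l * Uᵀ := by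
  have hH : A.IsHermitian := isHermitian_iff_isSymm.mpr hA
  have h_left := mem_unitaryGroup_iff'.mp hH.eigenvectorUnitary.2
  have h_right := mem_unitaryGroup_iff.mp hH.eigenvectorUnitary.2
  rw [star_eq_conjTranspose, conjTranspose_eq_transpose_of_trivial] at h_left h_right
  refine ⟨_, hH.eigenvalues, h_left, h_right, ?_⟩
  simpa [star_eq_conjTranspose] using hH.spectral_theorem

variable {U : Matrix ι ι ℝ} (hU : Uᵀ * U = 1) (l : ι → ℝ)
include hU

theorem Matrix.trace_conj_diagonal : (U * diagonal l * Uᵀ).trace = ∑ i, l i := by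
  rw [trace_mul_cycle, hU, one_mul, trace_diagonal]

theorem Matrix.sum_sq_conj_diagonal : ∑ i, ∑ j, (U * diagonal l * Uᵀ) i j ^ 2 = ∑ i, l i ^ 2 := by
  set A := U * diagonal l * Uᵀ
  have h_frobenius : ∑ i, ∑ j, A i j ^ 2 = (A * Aᵀ).trace := by
    simp only [trace, Matrix.diag, mul_apply, transpose_apply, sq]
  have h_square : A * Aᵀ = U * diagonal (l ^ 2) * Uᵀ := by
    simp only [A, transpose_mul, transpose_transpose, diagonal_transpose, Matrix.mul_assoc]
    rw [← Matrix.mul_assoc Uᵀ, hU, Matrix.one_mul, ← Matrix.mul_assoc (diagonal l),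
      diagonal_mul_diagonal, sq]
    rfl
  rw [h_frobenius, h_square, trace_conj_diagonal hU]
  rfl

end OrthogonalConjugation

theorem fundamental_algebraic_inequality_general
    (n : ℕ) (A : Matrix (Fin n) (Fin n) ℝ) (hA : A.IsSymm) (q : Fin n → ℝ) :
    |(A.mulVec q ⬝ᵥ A.mulVec q) - A.trace * (A.mulVec q ⬝ᵥ q)
        - (1 / 2) * ((∑ i, ∑ j, (A i j) ^ 2) - A.trace ^ 2) * (q ⬝ᵥ q)|
      ≤ ((n : ℝ) - 2) / 2 *
        ((∑ i, ∑ j, (A i j) ^ 2) * (q ⬝ᵥ q) - (A.mulVec q ⬝ᵥ A.mulVec q)) := by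
  obtain ⟨U, l, hU, hU', rfl⟩ := hA.exists_orthogonal_diagonalization
  set c := Uᵀ *ᵥ q
  have h_Aq : (U * diagonal l * Uᵀ) *ᵥ q = U *ᵥ (l * c) := by
    rw [← mulVec_mulVec, ← mulVec_mulVec]
    exact congrArg (U *ᵥ ·) (funext (mulVec_diagonal l c))
  have h_Aq_Aq : (U * diagonal l * Uᵀ) *ᵥ q ⬝ᵥ (U * diagonal l * Uᵀ) *ᵥ q
      = ∑ i, l i ^ 2 * c i ^ 2 := by
    rw [h_Aq, dotProduct_mulVec_mulVec_of_transpose_mul_self hU]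
    simp only [dotProduct, Pi.mul_apply]
    exact sum_congr rfl fun i _ ↦ by ring
  have h_Aq_q : (U * diagonal l * Uᵀ) *ᵥ q ⬝ᵥ q = ∑ i, l i * c i ^ 2 := by
    rw [h_Aq, dotProduct_comm, dotProduct_mulVec, ← mulVec_transpose]
    simp only [dotProduct, Pi.mul_apply]
    exact sum_congr rfl fun i _ ↦ by ring
  have h_q_q : q ⬝ᵥ q = ∑ i, c i ^ 2 := by
    rw [← dotProduct_mulVec_mulVec_of_transpose_mul_self (M := Uᵀ) (by rwa [transpose_transpose])]
    simp only [dotProduct, c, sq]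
  rw [h_Aq_Aq, h_Aq_q, h_q_q, trace_conj_diagonal hU, sum_sq_conj_diagonal hU]
  simpa using abs_weighted_sq_sub_sum_mul_sub_le l (c · ^ 2) fun i ↦ sq_nonneg (c i)

theorem fundamental_algebraic_inequality
    (n : ℕ) (hn : 2 ≤ n) (A : Matrix (Fin n) (Fin n) ℝ) (hA : A.IsSymm) (q : Fin n → ℝ) :
    |(A.mulVec q ⬝ᵥ A.mulVec q) - A.trace * (A.mulVec q ⬝ᵥ q)
        - (1 / 2) * ((∑ i, ∑ j, (A i j) ^ 2) - A.trace ^ 2) * (q ⬝ᵥ q)|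
      ≤ ((n : ℝ) - 2) / 2 *
        ((∑ i, ∑ j, (A i j) ^ 2) * (q ⬝ᵥ q) - (A.mulVec q ⬝ᵥ A.mulVec q)) :=
  fundamental_algebraic_inequality_general n A hA q
end

section
/- Let n ≥ 2 and let U ⊆ ℝⁿ be open. For every C² function v : U → ℝ, at every point of U one has | |D²v·Dv|² − Δv·Δ∞v − (1/2)(|D²v|² − (Δv)²)·|Dv|² | ≤ ((n−2)/2)·(|D²v|²·|Dv|² − |D²v·Dv|²). -/
/-!
Write `A` for the Hessian and `p` for the gradient at the point, `S = |p|²` and `P = S·I − p pᵀ`.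
With `Y = tr (A P)` and `X = tr (A P A P)`, `2S` times the expression inside the absolute value is
`Y² − X`, and `2S` times the right-hand side is `(n − 2)(X + |Ap|² S − ⟨Ap, p⟩²)`. Cauchy–Schwarz
for the Frobenius inner product of `P A P` and `P`, whose squared norm is `(n − 1) S²`, gives
`Y² ≤ (n − 1) X`; for `n = 2` the projection `P / S` has rank one and `X = Y²`. Hence
`|Y² − X| ≤ (n − 2) X`, and `⟨Ap, p⟩² ≤ |Ap|² S` finishes the proof.
-/

open MeasureTheory Real Set

/-- partial derivative in the `i`-th coordinate direction -/
noncomputable def pd {n : ℕ} (f : (Fin n → ℝ) → ℝ) (i : Fin n) (x : Fin n → ℝ) : ℝ :=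
  fderiv ℝ f x (Pi.single i 1)

/-- Hessian entry `∂_i ∂_j f` -/
noncomputable def hess {n : ℕ} (f : (Fin n → ℝ) → ℝ) (i j : Fin n) (x : Fin n → ℝ) : ℝ :=
  pd (pd f j) i x

/-- squared Euclidean norm of the gradient `|Df|²` -/
noncomputable def gradSq {n : ℕ} (f : (Fin n → ℝ) → ℝ) (x : Fin n → ℝ) : ℝ :=
  ∑ i, (pd f i x) ^ 2

/-- Laplacian `Δf = tr D²f` -/
noncomputable def lap {n : ℕ} (f : (Fin n → ℝ) → ℝ) (x : Fin n → ℝ) : ℝ :=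
  ∑ i, hess f i i x

/-- ∞-Laplacian `Δ∞f = ⟨D²f·Df, Df⟩` -/
noncomputable def infLap {n : ℕ} (f : (Fin n → ℝ) → ℝ) (x : Fin n → ℝ) : ℝ :=
  ∑ i, ∑ j, hess f i j x * pd f j x * pd f i x

/-- squared Frobenius norm of the Hessian `|D²f|²` -/
noncomputable def hessSq {n : ℕ} (f : (Fin n → ℝ) → ℝ) (x : Fin n → ℝ) : ℝ :=
  ∑ i, ∑ j, (hess f i j x) ^ 2

/-- squared Euclidean norm `|D²f·Df|²` -/
noncomputable def hessGradSq {n : ℕ} (f : (Fin n → ℝ) → ℝ) (x : Fin n → ℝ) : ℝ :=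
  ∑ i, (∑ j, hess f i j x * pd f j x) ^ 2

/-- time derivative `u_t` of a function `u(x,t)` -/
noncomputable def tderiv {n : ℕ} (u : (Fin n → ℝ) → ℝ → ℝ) (x : Fin n → ℝ) (t : ℝ) : ℝ :=
  deriv (u x) t

namespace Matrix

variable {R ι : Type*} [Fintype ι]

section OrderedCommRing

variable [CommRing R] [LinearOrder R] [IsStrictOrderedRing R]

theorem sq_dotProduct_le (v w : ι → R) : (v ⬝ᵥ w) ^ 2 ≤ (v ⬝ᵥ v) * (w ⬝ᵥ w) := by
  simpa only [dotProduct, sq] using Finset.sum_mul_sq_le_sq_mul_sq Finset.univ v w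

theorem sq_trace_transpose_mul_le {κ : Type*} [Fintype κ] (X Y : Matrix κ ι R) :
    trace (Xᵀ * Y) ^ 2 ≤ trace (Xᵀ * X) * trace (Yᵀ * Y) := by
  simpa only [dotProduct, trace, diag, mul_apply, transpose_apply, Fintype.sum_prod_type_right]
    using sq_dotProduct_le (fun k : κ × ι => X k.1 k.2) (fun k => Y k.1 k.2)

end OrderedCommRing

variable [DecidableEq ι]

/-- `(p ⬝ᵥ p)` times the orthogonal projection onto `pᗮ`; the scaling avoids division. -/
def perpProj [CommRing R] (p : ι → R) : Matrix ι ι R := (p ⬝ᵥ p) • 1 - vecMulVec p p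

section CommRing

variable [CommRing R] (A : Matrix ι ι R) (p : ι → R)

lemma transpose_perpProj : (perpProj p)ᵀ = perpProj p := by
  simp [perpProj, transpose_vecMulVec]

lemma perpProj_mul_self : perpProj p * perpProj p = (p ⬝ᵥ p) • perpProj p := by
  simp only [perpProj, sub_mul, mul_sub, Matrix.smul_mul, Matrix.mul_smul, vecMulVec_mul_vecMulVec,
    Matrix.one_mul, Matrix.mul_one, vecMulVec_smul]
  module

lemma trace_perpProj : trace (perpProj p) = (Fintype.card ι - 1) * (p ⬝ᵥ p) := by
  simp [perpProj]
  ring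

lemma trace_perpProj_mul_mul_perpProj (M : Matrix ι ι R) :
    trace (perpProj p * (M * perpProj p)) = (p ⬝ᵥ p) * trace (M * perpProj p) := by
  rw [trace_mul_comm, Matrix.mul_assoc, perpProj_mul_self, Matrix.mul_smul, trace_smul, smul_eq_mul]

lemma mul_perpProj : A * perpProj p = (p ⬝ᵥ p) • A - vecMulVec (A *ᵥ p) p := by
  simp [perpProj, mul_sub, mul_vecMulVec]

lemma trace_mul_perpProj : trace (A * perpProj p) = trace A * (p ⬝ᵥ p) - (A *ᵥ p) ⬝ᵥ p := by
  simp [mul_perpProj]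
  ring

lemma trace_mul_perpProj_mul_self (hA : A.IsSymm) :
    trace (A * perpProj p * (A * perpProj p)) = (p ⬝ᵥ p) ^ 2 * trace (Aᵀ * A)
      - 2 * (p ⬝ᵥ p) * ((A *ᵥ p) ⬝ᵥ (A *ᵥ p)) + ((A *ᵥ p) ⬝ᵥ p) ^ 2 := by
  have hp : p ᵥ* A = A *ᵥ p := by rw [← mulVec_transpose, hA.eq]
  have hq : (A *ᵥ (A *ᵥ p)) ⬝ᵥ p = (A *ᵥ p) ⬝ᵥ (A *ᵥ p) := by
    rw [dotProduct_comm, dotProduct_mulVec, hp]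
  rw [mul_perpProj, hA.eq]
  simp only [sub_mul, mul_sub, Matrix.smul_mul, Matrix.mul_smul, vecMulVec_mul_vecMulVec, trace_sub,
    trace_smul]
  simp only [mul_vecMulVec, vecMulVec_mul, hp, trace_vecMulVec, smul_eq_mul, dotProduct_smul, hq]
  rw [dotProduct_comm p (A *ᵥ p)]
  ring

lemma trace_mul_perpProj_mul_self_of_card_eq_two (h : Fintype.card ι = 2) :
    trace (A * perpProj p * (A * perpProj p)) = trace (A * perpProj p) ^ 2 := by
  obtain ⟨i, j, hij, huniv⟩ := Finset.card_eq_two.mp (Finset.card_univ.trans h)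
  simp only [trace, diag, mul_apply, perpProj, sub_apply, smul_apply, one_apply, vecMulVec_apply,
    dotProduct, huniv, Finset.sum_pair hij, if_pos, hij, hij.symm, if_false, smul_eq_mul]
  ring

end CommRing

section OrderedCommRing

variable [CommRing R] [LinearOrder R] [IsStrictOrderedRing R] (A : Matrix ι ι R) (p : ι → R)

theorem sq_trace_mul_perpProj_le (hA : A.IsSymm) :
    trace (A * perpProj p) ^ 2
      ≤ (Fintype.card ι - 1) * trace (A * perpProj p * (A * perpProj p)) := by
  rcases eq_or_ne p 0 with rfl | hp
  · simp [perpProj]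
  set P := perpProj p
  set S := p ⬝ᵥ p
  have hS : S ≠ 0 := mt dotProduct_self_eq_zero.mp hp
  have hPP : P * P = S • P := perpProj_mul_self p
  have hPt : Pᵀ = P := transpose_perpProj p
  have hcyc : ∀ M, trace (P * (M * P)) = S * trace (M * P) := trace_perpProj_mul_mul_perpProj p
  have hPAP : (P * A * P)ᵀ = P * A * P := by
    rw [transpose_mul, transpose_mul, hPt, hA.eq, Matrix.mul_assoc]
  have hcs := sq_trace_transpose_mul_le (P * A * P) P
  have hinner : trace ((P * A * P)ᵀ * P) = S ^ 2 * trace (A * P) := by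
    rw [hPAP]
    simp only [Matrix.mul_assoc, hPP, Matrix.mul_smul, trace_smul, hcyc, smul_eq_mul]
    ring
  have hnormPAP : trace ((P * A * P)ᵀ * (P * A * P)) = S ^ 2 * trace (A * P * (A * P)) := by
    have hsq : P * A * P * (P * A * P) = S • (P * (A * P * A * P)) := by
      simp only [Matrix.mul_assoc]
      rw [← Matrix.mul_assoc P P, hPP, Matrix.smul_mul, Matrix.mul_smul, Matrix.mul_smul]
    rw [hPAP, hsq, trace_smul, hcyc, smul_eq_mul, ← Matrix.mul_assoc (A * P)]
    ring
  have hnormP : trace (Pᵀ * P) = S * ((Fintype.card ι - 1) * S) := by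
    rw [hPt, hPP, trace_smul, trace_perpProj, smul_eq_mul]
  rw [hinner, hnormPAP, hnormP] at hcs
  refine le_of_mul_le_mul_left (a := S ^ 4) ?_ (by positivity)
  linear_combination hcs

theorem sub_card_mul_trace_mul_perpProj_mul_self_le (hA : A.IsSymm) (hn : 2 ≤ Fintype.card ι) :
    (3 - Fintype.card ι) * trace (A * perpProj p * (A * perpProj p))
      ≤ trace (A * perpProj p) ^ 2 := by
  rcases hn.eq_or_lt with hn | hn
  · rw [trace_mul_perpProj_mul_self_of_card_eq_two A p hn.symm, ← hn]
    norm_num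
  · have hcs := sq_trace_mul_perpProj_le A p hA
    have hn3 : (3 : R) ≤ Fintype.card ι := by exact_mod_cast hn
    nlinarith [sq_nonneg (trace (A * perpProj p))]

end OrderedCommRing

section LinearOrderedField

variable [Field R] [LinearOrder R] [IsStrictOrderedRing R] {A : Matrix ι ι R} (p : ι → R)

theorem IsSymm.fundamental_inequality (hA : A.IsSymm) (hn : 2 ≤ Fintype.card ι) :
    |(A *ᵥ p) ⬝ᵥ (A *ᵥ p) - trace A * ((A *ᵥ p) ⬝ᵥ p)
        - 1 / 2 * (trace (Aᵀ * A) - trace A ^ 2) * (p ⬝ᵥ p)|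
      ≤ ((Fintype.card ι : R) - 2) / 2 * (trace (Aᵀ * A) * (p ⬝ᵥ p) - (A *ᵥ p) ⬝ᵥ (A *ᵥ p)) := by
  rcases eq_or_ne p 0 with rfl | hp
  · simp
  have h2S : 0 < 2 * (p ⬝ᵥ p) :=
    mul_pos two_pos <| lt_of_le_of_ne' (Finset.sum_nonneg fun i _ => mul_self_nonneg (p i))
      (mt dotProduct_self_eq_zero.mp hp)
  have hn' : (2 : R) ≤ Fintype.card ι := by exact_mod_cast hn
  have hup := sq_trace_mul_perpProj_le A p hA
  have hlow := sub_card_mul_trace_mul_perpProj_mul_self_le A p hA hn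
  have hZ := sq_dotProduct_le (A *ᵥ p) p
  have hY := trace_mul_perpProj A p
  have hX := trace_mul_perpProj_mul_self A p hA
  set n : R := (Fintype.card ι : R)
  set S := p ⬝ᵥ p
  set T := trace A
  set F := trace (Aᵀ * A)
  set G := (A *ᵥ p) ⬝ᵥ (A *ᵥ p)
  set a := (A *ᵥ p) ⬝ᵥ p
  set Y := trace (A * perpProj p)
  set X := trace (A * perpProj p * (A * perpProj p))
  have key : |Y ^ 2 - X| ≤ (n - 2) * (X + (G * S - a ^ 2)) := by
    have := mul_nonneg (sub_nonneg.mpr hn') (sub_nonneg.mpr hZ)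
    exact abs_le.mpr ⟨by nlinarith, by nlinarith⟩
  refine le_of_mul_le_mul_left ?_ h2S
  calc 2 * S * |G - T * a - 1 / 2 * (F - T ^ 2) * S|
      = |Y ^ 2 - X| := by
        rw [← abs_of_pos h2S, ← abs_mul, hY, hX]
        congr 1
        ring
    _ ≤ (n - 2) * (X + (G * S - a ^ 2)) := key
    _ = 2 * S * ((n - 2) / 2 * (F * S - G)) := by
        rw [hX]
        ring

end LinearOrderedField

end Matrix

open Matrix

section Calculus

variable {n : ℕ} (f : (Fin n → ℝ) → ℝ) (x : Fin n → ℝ)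

noncomputable def gradVec : Fin n → ℝ := fun i => pd f i x

noncomputable def hessMatrix : Matrix (Fin n) (Fin n) ℝ := Matrix.of fun i j => hess f i j x

lemma gradSq_eq_dotProduct : gradSq f x = gradVec f x ⬝ᵥ gradVec f x := by
  simp [gradSq, gradVec, dotProduct, sq]

lemma lap_eq_trace : lap f x = trace (hessMatrix f x) := rfl

lemma infLap_eq_dotProduct : infLap f x = (hessMatrix f x *ᵥ gradVec f x) ⬝ᵥ gradVec f x := by
  simp [infLap, hessMatrix, gradVec, dotProduct, mulVec, Finset.sum_mul]

lemma hessSq_eq_trace : hessSq f x = trace ((hessMatrix f x)ᵀ * hessMatrix f x) := by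
  simp only [hessSq, hessMatrix, trace, diag, mul_apply, transpose_apply, of_apply, sq]
  exact Finset.sum_comm

lemma hessGradSq_eq_dotProduct :
    hessGradSq f x = (hessMatrix f x *ᵥ gradVec f x) ⬝ᵥ (hessMatrix f x *ᵥ gradVec f x) := by
  simp [hessGradSq, hessMatrix, gradVec, dotProduct, mulVec, sq]

lemma hess_eq_fderiv_fderiv (hf : DifferentiableAt ℝ (fderiv ℝ f) x) (i j : Fin n) :
    hess f i j x = fderiv ℝ (fderiv ℝ f) x (Pi.single i 1) (Pi.single j 1) := by
  show fderiv ℝ (fun y => fderiv ℝ f y (Pi.single j 1)) x (Pi.single i 1) = _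
  rw [fderiv_clm_apply hf (differentiableAt_const _)]
  simp

lemma isSymm_hessMatrix (hf : ContDiffAt ℝ 2 f x) : (hessMatrix f x).IsSymm := by
  have hsymm := hf.isSymmSndFDerivAt (by simp [minSmoothness_of_isRCLikeNormedField])
  have hd : DifferentiableAt ℝ (fderiv ℝ f) x :=
    (hf.fderiv_right le_rfl).differentiableAt one_ne_zero
  ext i j
  simp only [transpose_apply, hessMatrix, of_apply, hess_eq_fderiv_fderiv f x hd]
  exact hsymm _ _

end Calculus

theorem fundamental_inequality_C2
    (n : ℕ) (hn : 2 ≤ n) (U : Set (Fin n → ℝ)) (hU : IsOpen U)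
    (v : (Fin n → ℝ) → ℝ) (hv : ContDiffOn ℝ 2 v U) :
    ∀ x ∈ U,
      |hessGradSq v x - lap v x * infLap v x
          - (1 / 2) * (hessSq v x - (lap v x) ^ 2) * gradSq v x|
        ≤ ((n : ℝ) - 2) / 2 * (hessSq v x * gradSq v x - hessGradSq v x) := by
  intro x hx
  have hsymm := isSymm_hessMatrix v x ((hv x hx).contDiffAt (hU.mem_nhds hx))
  rw [hessGradSq_eq_dotProduct, lap_eq_trace, infLap_eq_dotProduct, hessSq_eq_trace,
    gradSq_eq_dotProduct]
  simpa using hsymm.fundamental_inequality (gradVec v x) (by simpa using hn)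
end

section
/- Let n ≥ 2, let Ω ⊆ ℝⁿ be open, let β ∈ ℝ and ε > 0, let v : Ω → ℝ be smooth, let ψ : Ω → ℝ be smooth with compact support in Ω, and let c ∈ ℝⁿ. Define the smooth vector field V : Ω → ℝⁿ by V(x) = (|Dv(x)|² + ε)^{β/2} Dv(x). Then ∫_Ω σ₂(DV) ψ dx = ∫_Ω Σ_{1≤i<j≤n} (V_i − c_i) ( ∂_{x_i}V_j · ∂_{x_j}ψ − ∂_{x_j}V_j · ∂_{x_i}ψ ) dx. -/
open MeasureTheory Real Set

/-- the vector field `V(x) = (|Dv(x)|² + ε)^{β/2} Dv(x)` (component `i`) -/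
noncomputable def Vfield {n : ℕ} (β ε : ℝ) (v : (Fin n → ℝ) → ℝ) (i : Fin n)
    (x : Fin n → ℝ) : ℝ :=
  (gradSq v x + ε) ^ (β / 2) * pd v i x

lemma pd_mul {N : ℕ} {f g : (Fin N → ℝ) → ℝ} {x : Fin N → ℝ}
    (hf : DifferentiableAt ℝ f x) (hg : DifferentiableAt ℝ g x) (i : Fin N) :
    pd (fun y => f y * g y) i x = pd f i x * g x + f x * pd g i x := by
  unfold pd
  rw [fderiv_fun_mul hf hg]
  simp only [ContinuousLinearMap.add_apply, ContinuousLinearMap.smul_apply, smul_eq_mul]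
  ring

lemma pd_sub_const {N : ℕ} (f : (Fin N → ℝ) → ℝ) (c : ℝ) (x : Fin N → ℝ) (i : Fin N) :
    pd (fun y => f y - c) i x = pd f i x := by
  unfold pd
  rw [fderiv_sub_const]

lemma pd_eq_zero_of_eventually {N : ℕ} {f : (Fin N → ℝ) → ℝ} {x : Fin N → ℝ}
    (h : ∀ᶠ y in nhds x, f y = 0) (i : Fin N) : pd f i x = 0 := by
  unfold pd
  have : f =ᶠ[nhds x] (fun _ => (0:ℝ)) := h
  rw [this.fderiv_eq, fderiv_fun_const]
  simp

lemma pd_eq_zero_of_nmem {N : ℕ} {f : (Fin N → ℝ) → ℝ} {K : Set (Fin N → ℝ)} (hK : IsClosed K)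
    (h0 : ∀ y ∉ K, f y = 0) {x : Fin N → ℝ} (hx : x ∉ K) (i : Fin N) : pd f i x = 0 := by
  apply pd_eq_zero_of_eventually _ i
  filter_upwards [hK.isOpen_compl.mem_nhds hx] with y hy
  exact h0 y hy

/-- gluing: smooth on `Ω`, zero off a closed `K ⊆ Ω` gives global smoothness -/
lemma contDiff_glue {N : ℕ} {Ω : Set (Fin N → ℝ)} (hΩ : IsOpen Ω) {K : Set (Fin N → ℝ)}
    (hK : IsClosed K) (hKΩ : K ⊆ Ω) {f : (Fin N → ℝ) → ℝ} {k : ℕ}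
    (hf : ContDiffOn ℝ k f Ω) (h0 : ∀ x ∉ K, f x = 0) : ContDiff ℝ k f := by
  rw [← contDiffOn_univ]
  apply contDiffOn_of_locally_contDiffOn
  intro x _
  by_cases hx : x ∈ Ω
  · exact ⟨Ω, hΩ, hx, hf.mono (by simp)⟩
  · refine ⟨Kᶜ, hK.isOpen_compl, fun h => hx (hKΩ h), ?_⟩
    exact (contDiffOn_const (c := (0:ℝ))).congr fun y hy => h0 y hy.2


/-- key: integral of a partial derivative of a compactly supported C¹ function vanishes -/
lemma integral_pd_eq_zero {m : ℕ} (f : (Fin (m+1) → ℝ) → ℝ)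
    (hf : ContDiff ℝ 1 f) (hsupp : HasCompactSupport f) (i : Fin (m+1)) :
    ∫ x, pd f i x = 0 := by
  obtain ⟨R, hR⟩ := (Metric.isBounded_iff_subset_closedBall 0).1 hsupp.isBounded
  set a : Fin (m+1) → ℝ := fun _ => -(|R|+1) with ha
  set b : Fin (m+1) → ℝ := fun _ => |R|+1 with hb
  have hnt : ∀ x : Fin (m+1) → ℝ, (∃ j, |R| < |x j|) → x ∉ tsupport f := by
    rintro x ⟨j, hj⟩ hx
    have h2 := hR hx
    rw [Metric.mem_closedBall, dist_zero_right] at h2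
    have h1 : |x j| ≤ ‖x‖ := norm_le_pi_norm x j
    have h3 : ‖x‖ ≤ |R| := le_trans h2 (le_abs_self R)
    linarith
  have hout : ∀ x : Fin (m+1) → ℝ, (∃ j, |R| < |x j|) → f x = 0 :=
    fun x hx => image_eq_zero_of_notMem_tsupport (hnt x hx)
  have hfd : ∀ x, HasFDerivAt f (fderiv ℝ f x) x :=
    fun x => (hf.differentiable one_ne_zero x).hasFDerivAt
  have hL : (fun x => ∑ k, (if k = i then fderiv ℝ f x else 0) (Pi.single k (1:ℝ))) =
      fun x => pd f i x := by
    funext x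
    rw [Finset.sum_eq_single i]
    · simp [pd]
    · intro k _ hk; simp [hk]
    · simp
  have key := MeasureTheory.integral_divergence_of_hasFDerivAt_off_countable'
    (a := a) (b := b)
    (fun j => by simp only [ha, hb]; linarith [abs_nonneg R])
    (fun k x => if k = i then f x else 0)
    (fun k x => if k = i then fderiv ℝ f x else 0)
    ∅ Set.countable_empty
    (fun k => by
      by_cases h : k = i
      · simpa [h] using hf.continuous.continuousOn
      · simpa [h] using continuousOn_const)
    (fun x _ k => by
      by_cases h : k = i
      · simpa [h] using hfd x
      · simpa [h] using hasFDerivAt_const (0:ℝ) x)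
    (by
      rw [hL]
      have hc : Continuous (pd f i) := by
        have := hf.continuous_fderiv one_ne_zero
        exact (ContinuousLinearMap.apply ℝ ℝ (Pi.single i (1:ℝ))).continuous.comp this
      exact hc.continuousOn.integrableOn_compact isCompact_Icc)
  rw [hL, Finset.sum_eq_zero] at key
  · rw [← MeasureTheory.setIntegral_eq_integral_of_forall_compl_eq_zero (s := Icc a b)]
    · exact key
    · intro x hx
      have hj : ∃ j, |R| < |x j| := by
        simp only [Set.mem_Icc, not_and_or, Pi.le_def, not_forall, ha, hb] at hx
        rcases hx with ⟨j, hj⟩ | ⟨j, hj⟩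
        · exact ⟨j, by linarith [neg_abs_le (x j)]⟩
        · exact ⟨j, by linarith [le_abs_self (x j)]⟩
      exact pd_eq_zero_of_nmem (isClosed_tsupport f)
        (fun y hy => image_eq_zero_of_notMem_tsupport hy) (hnt x hj) i
  · intro k _
    by_cases h : k = i
    · subst h
      have h1 : ∀ y : Fin m → ℝ, f (Fin.insertNth k (b k) y) = 0 := by
        intro y
        apply hout
        refine ⟨k, ?_⟩
        rw [Fin.insertNth_apply_same]
        simp only [hb]
        rw [abs_of_pos (show (0:ℝ) < |R| + 1 by positivity)]
        linarith
      have h2 : ∀ y : Fin m → ℝ, f (Fin.insertNth k (a k) y) = 0 := by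
        intro y
        apply hout
        refine ⟨k, ?_⟩
        rw [Fin.insertNth_apply_same]
        simp only [ha]
        rw [abs_neg, abs_of_pos (show (0:ℝ) < |R| + 1 by positivity)]
        linarith
      simp [h1, h2]
    · simp [h]

lemma hess_comm {N : ℕ} {f : (Fin N → ℝ) → ℝ} {x : Fin N → ℝ}
    (hf : ContDiffAt ℝ 2 f x) (i j : Fin N) : hess f i j x = hess f j i x := by
  have hsymm : IsSymmSndFDerivAt ℝ f x := hf.isSymmSndFDerivAt (by norm_num)
  have hd : DifferentiableAt ℝ (fderiv ℝ f) x :=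
    (hf.fderiv_right (m := 1) (by norm_num)).differentiableAt (by norm_num)
  have key : ∀ a : Fin N, (fderiv ℝ (fun y => fderiv ℝ f y (Pi.single a 1)) x) =
      (fderiv ℝ (fderiv ℝ f) x).flip (Pi.single a (1:ℝ)) := by
    intro a
    rw [fderiv_clm_apply hd (differentiableAt_const (Pi.single a (1:ℝ)))]
    simp
  show pd (pd f j) i x = pd (pd f i) j x
  unfold pd
  rw [key j, key i]
  simp only [ContinuousLinearMap.flip_apply]
  exact hsymm _ _

lemma pair_step {m : ℕ} {Ω : Set (Fin (m+1) → ℝ)} (hΩ : IsOpen Ω)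
    (w₁ w₂ ψ : (Fin (m+1) → ℝ) → ℝ)
    (hw₁ : ContDiffOn ℝ 3 w₁ Ω) (hw₂ : ContDiffOn ℝ 3 w₂ Ω)
    (hψ : ContDiff ℝ 3 ψ) (hψs : HasCompactSupport ψ) (hψΩ : tsupport ψ ⊆ Ω)
    (ci : ℝ) (i j : Fin (m+1)) :
    Integrable (fun x => (pd w₁ i x * pd w₂ j x - pd w₁ j x * pd w₂ i x) * ψ x)
    ∧ Integrable (fun x => (w₁ x - ci) * (pd w₂ i x * pd ψ j x - pd w₂ j x * pd ψ i x))
    ∧ (∫ x, (pd w₁ i x * pd w₂ j x - pd w₁ j x * pd w₂ i x) * ψ x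
        = ∫ x, (w₁ x - ci) * (pd w₂ i x * pd ψ j x - pd w₂ j x * pd ψ i x)) := by
  have hK : IsClosed (tsupport ψ) := isClosed_tsupport ψ
  have hψ0 : ∀ x ∉ tsupport ψ, ψ x = 0 := fun x hx => image_eq_zero_of_notMem_tsupport hx
  have hψev : ∀ x ∉ tsupport ψ, ∀ᶠ y in nhds x, ψ y = 0 := by
    intro x hx
    filter_upwards [hK.isOpen_compl.mem_nhds hx] with y hy using hψ0 y hy
  have hpdψ0 : ∀ x ∉ tsupport ψ, ∀ k, pd ψ k x = 0 :=
    fun x hx k => pd_eq_zero_of_eventually (hψev x hx) k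
  have hpd : ∀ (w : (Fin (m+1) → ℝ) → ℝ), ContDiffOn ℝ 3 w Ω →
      ∀ k : Fin (m+1), ContDiffOn ℝ 2 (pd w k) Ω := by
    intro w hw k
    exact (hw.fderiv_of_isOpen hΩ (by norm_num)).clm_apply contDiffOn_const
  have hψ2 : ContDiff ℝ 2 ψ := hψ.of_le (by norm_num)
  have hpdψc : ∀ k : Fin (m+1), ContDiff ℝ 2 (pd ψ k) := fun k =>
    (hψ.fderiv_right (by norm_num)).clm_apply contDiff_const
  have hdiff : ∀ (g : (Fin (m+1) → ℝ) → ℝ), ContDiffOn ℝ 2 g Ω →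
      ∀ {x}, x ∈ Ω → DifferentiableAt ℝ g x := fun g hg x hx =>
    ((hg.contDiffAt (hΩ.mem_nhds hx)).differentiableAt (by norm_num))
  set E1 : (Fin (m+1) → ℝ) → ℝ :=
    fun x => (pd w₁ i x * pd w₂ j x - pd w₁ j x * pd w₂ i x) * ψ x with hE1
  set E2 : (Fin (m+1) → ℝ) → ℝ :=
    fun x => (w₁ x - ci) * (pd w₂ i x * pd ψ j x - pd w₂ j x * pd ψ i x) with hE2
  set F : (Fin (m+1) → ℝ) → ℝ := fun x => (w₁ x - ci) * (pd w₂ j x * ψ x) with hF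
  set G : (Fin (m+1) → ℝ) → ℝ := fun x => (w₁ x - ci) * (pd w₂ i x * ψ x) with hG
  have hw₁2 : ContDiffOn ℝ 2 w₁ Ω := hw₁.of_le (by norm_num)
  have hw₁c : ContDiffOn ℝ 2 (fun x => w₁ x - ci) Ω := hw₁2.sub contDiffOn_const
  -- global smoothness by gluing
  have cE1 : ContDiff ℝ 2 E1 := by
    apply contDiff_glue hΩ hK hψΩ (k := 2)
    · exact (((hpd w₁ hw₁ i).mul (hpd w₂ hw₂ j)).sub
        ((hpd w₁ hw₁ j).mul (hpd w₂ hw₂ i))).mul hψ2.contDiffOn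
    · intro x hx; simp [hE1, hψ0 x hx]
  have cE2 : ContDiff ℝ 2 E2 := by
    apply contDiff_glue hΩ hK hψΩ (k := 2)
    · exact hw₁c.mul ((((hpd w₂ hw₂ i)).mul (hpdψc j).contDiffOn).sub
        (((hpd w₂ hw₂ j)).mul (hpdψc i).contDiffOn))
    · intro x hx; simp [hE2, hpdψ0 x hx i, hpdψ0 x hx j]
  have cF : ContDiff ℝ 2 F := by
    apply contDiff_glue hΩ hK hψΩ (k := 2)
    · exact hw₁c.mul ((hpd w₂ hw₂ j).mul hψ2.contDiffOn)
    · intro x hx; simp [hF, hψ0 x hx]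
  have cG : ContDiff ℝ 2 G := by
    apply contDiff_glue hΩ hK hψΩ (k := 2)
    · exact hw₁c.mul ((hpd w₂ hw₂ i).mul hψ2.contDiffOn)
    · intro x hx; simp [hG, hψ0 x hx]
  have hF0 : ∀ x ∉ tsupport ψ, F x = 0 := fun x hx => by simp [hF, hψ0 x hx]
  have hG0 : ∀ x ∉ tsupport ψ, G x = 0 := fun x hx => by simp [hG, hψ0 x hx]
  -- integrability
  have intE1 : Integrable E1 := by
    apply cE1.continuous.integrable_of_hasCompactSupport
    exact HasCompactSupport.intro hψs (fun x hx => by simp [hE1, hψ0 x hx])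
  have intE2 : Integrable E2 := by
    apply cE2.continuous.integrable_of_hasCompactSupport
    exact HasCompactSupport.intro hψs
      (fun x hx => by simp [hE2, hpdψ0 x hx i, hpdψ0 x hx j])
  have intPd : ∀ (H : (Fin (m+1) → ℝ) → ℝ), ContDiff ℝ 2 H →
      (∀ x ∉ tsupport ψ, H x = 0) → ∀ k : Fin (m+1), Integrable (pd H k) := by
    intro H hH hH0 k
    have hc : Continuous (pd H k) := by
      have h1 : ContDiff ℝ 1 (fderiv ℝ H) := hH.fderiv_right (by norm_num)
      exact (h1.clm_apply contDiff_const).continuous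
    apply hc.integrable_of_hasCompactSupport
    exact HasCompactSupport.intro hψs (fun x hx => pd_eq_zero_of_nmem hK hH0 hx k)
  -- integrals of pd F i and pd G j vanish
  have hIF : ∫ x, pd F i x = 0 :=
    integral_pd_eq_zero F (cF.of_le (by norm_num))
      (HasCompactSupport.intro hψs hF0) i
  have hIG : ∫ x, pd G j x = 0 :=
    integral_pd_eq_zero G (cG.of_le (by norm_num))
      (HasCompactSupport.intro hψs hG0) j
  -- pointwise identity
  have hpt : ∀ x, E1 x - E2 x = pd F i x - pd G j x := by
    intro x
    by_cases hx : x ∈ Ω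
    · have dw₁ : DifferentiableAt ℝ (fun y => w₁ y - ci) x := hdiff _ hw₁c hx
      have dpw₂i : DifferentiableAt ℝ (pd w₂ i) x := hdiff _ (hpd w₂ hw₂ i) hx
      have dpw₂j : DifferentiableAt ℝ (pd w₂ j) x := hdiff _ (hpd w₂ hw₂ j) hx
      have dψ : DifferentiableAt ℝ ψ x := hψ.differentiable (by norm_num) x
      have hFi : pd F i x = pd w₁ i x * (pd w₂ j x * ψ x) +
          (w₁ x - ci) * (hess w₂ i j x * ψ x + pd w₂ j x * pd ψ i x) := by
        rw [hF, pd_mul (g := fun y => pd w₂ j y * ψ y) dw₁ (dpw₂j.mul dψ) i, pd_sub_const,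
          pd_mul dpw₂j dψ i]
        rfl
      have hGj : pd G j x = pd w₁ j x * (pd w₂ i x * ψ x) +
          (w₁ x - ci) * (hess w₂ j i x * ψ x + pd w₂ i x * pd ψ j x) := by
        rw [hG, pd_mul (g := fun y => pd w₂ i y * ψ y) dw₁ (dpw₂i.mul dψ) j, pd_sub_const,
          pd_mul dpw₂i dψ j]
        rfl
      have hsym : hess w₂ i j x = hess w₂ j i x :=
        hess_comm ((hw₂.contDiffAt (hΩ.mem_nhds hx)).of_le (by norm_num)) i j
      rw [hE1, hE2, hFi, hGj, hsym]
      ring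
    · have hxψ : x ∉ tsupport ψ := fun h => hx (hψΩ h)
      have hFz : pd F i x = 0 := by
        apply pd_eq_zero_of_eventually _ i
        filter_upwards [hψev x hxψ] with y hy
        simp [hF, hy]
      have hGz : pd G j x = 0 := by
        apply pd_eq_zero_of_eventually _ j
        filter_upwards [hψev x hxψ] with y hy
        simp [hG, hy]
      simp [hE1, hE2, hFz, hGz, hψ0 x hxψ, hpdψ0 x hxψ i, hpdψ0 x hxψ j]
  refine ⟨intE1, intE2, ?_⟩
  have h1 : (∫ x, E1 x) - ∫ x, E2 x = 0 := by
    rw [← integral_sub intE1 intE2]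
    have : (fun x => E1 x - E2 x) = fun x => pd F i x - pd G j x := funext hpt
    rw [this, integral_sub (intPd F cF hF0 i) (intPd G cG hG0 j), hIF, hIG, sub_zero]
  linarith [h1]

theorem sigma2_integration_by_parts
    (n : ℕ) (hn : 2 ≤ n) (Ω : Set (Fin n → ℝ)) (hΩ : IsOpen Ω)
    (β ε : ℝ) (hε : 0 < ε)
    (v ψ : (Fin n → ℝ) → ℝ) (hv : ContDiffOn ℝ (⊤ : ℕ∞) v Ω)
    (hψ : ContDiff ℝ (⊤ : ℕ∞) ψ) (hψs : HasCompactSupport ψ) (hψΩ : tsupport ψ ⊆ Ω)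
    (c : Fin n → ℝ) :
    (∫ x in Ω, (∑ i, ∑ j, if i < j then
        pd (Vfield β ε v i) i x * pd (Vfield β ε v j) j x
          - pd (Vfield β ε v i) j x * pd (Vfield β ε v j) i x else 0) * ψ x)
      = ∫ x in Ω, ∑ i, ∑ j, if i < j then
          (Vfield β ε v i x - c i) *
            (pd (Vfield β ε v j) i x * pd ψ j x - pd (Vfield β ε v j) j x * pd ψ i x)
          else 0 := by
  obtain ⟨m, rfl⟩ : ∃ m, n = m + 1 := ⟨n - 1, by omega⟩
  have hψ3 : ContDiff ℝ 3 ψ := hψ.of_le (WithTop.coe_le_coe.mpr le_top)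
  have hfd : ContDiffOn ℝ 3 (fderiv ℝ v) Ω := hv.fderiv_of_isOpen hΩ (WithTop.coe_le_coe.mpr le_top)
  have hpdv : ∀ k : Fin (m+1), ContDiffOn ℝ 3 (pd v k) Ω := fun k =>
    hfd.clm_apply contDiffOn_const
  have hg : ContDiffOn ℝ 3 (fun x => gradSq v x + ε) Ω :=
    (ContDiffOn.sum fun k _ => (hpdv k).pow 2).add contDiffOn_const
  have hW : ∀ k : Fin (m+1), ContDiffOn ℝ 3 (Vfield β ε v k) Ω := by
    intro k
    have h1 : ContDiffOn ℝ 3 (fun x => (gradSq v x + ε) ^ (β/2)) Ω := by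
      apply hg.rpow_const_of_ne
      intro x _
      have h0 : 0 ≤ gradSq v x := Finset.sum_nonneg fun _ _ => sq_nonneg _
      nlinarith
    exact h1.mul (hpdv k)
  have hψ0 : ∀ x ∉ tsupport ψ, ψ x = 0 := fun x hx => image_eq_zero_of_notMem_tsupport hx
  have hpdψ0 : ∀ x ∉ tsupport ψ, ∀ k, pd ψ k x = 0 := by
    intro x hx k
    apply pd_eq_zero_of_eventually _ k
    filter_upwards [(isClosed_tsupport ψ).isOpen_compl.mem_nhds hx] with y hy
    exact hψ0 y hy
  have hout : ∀ x, x ∉ Ω → x ∉ tsupport ψ := fun x hx h => hx (hψΩ h)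
  have key : ∀ i j : Fin (m+1),
      Integrable (fun x => (pd (Vfield β ε v i) i x * pd (Vfield β ε v j) j x
          - pd (Vfield β ε v i) j x * pd (Vfield β ε v j) i x) * ψ x)
      ∧ Integrable (fun x => (Vfield β ε v i x - c i) *
          (pd (Vfield β ε v j) i x * pd ψ j x - pd (Vfield β ε v j) j x * pd ψ i x))
      ∧ ((∫ x, (pd (Vfield β ε v i) i x * pd (Vfield β ε v j) j x
          - pd (Vfield β ε v i) j x * pd (Vfield β ε v j) i x) * ψ x)
        = ∫ x, (Vfield β ε v i x - c i) *
          (pd (Vfield β ε v j) i x * pd ψ j x - pd (Vfield β ε v j) j x * pd ψ i x)) :=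
    fun i j => pair_step hΩ (Vfield β ε v i) (Vfield β ε v j) ψ (hW i) (hW j)
      hψ3 hψs hψΩ (c i) i j
  calc
    (∫ x in Ω, (∑ i, ∑ j, if i < j then
        pd (Vfield β ε v i) i x * pd (Vfield β ε v j) j x
          - pd (Vfield β ε v i) j x * pd (Vfield β ε v j) i x else 0) * ψ x)
      = ∫ x, (∑ i, ∑ j, if i < j then
          pd (Vfield β ε v i) i x * pd (Vfield β ε v j) j x
            - pd (Vfield β ε v i) j x * pd (Vfield β ε v j) i x else 0) * ψ x := by
        apply setIntegral_eq_integral_of_forall_compl_eq_zero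
        intro x hx
        rw [hψ0 x (hout x hx), mul_zero]
    _ = ∫ x, ∑ i, ∑ j, (if i < j then
          (pd (Vfield β ε v i) i x * pd (Vfield β ε v j) j x
            - pd (Vfield β ε v i) j x * pd (Vfield β ε v j) i x) * ψ x else 0) := by
        congr 1
        funext x
        rw [Finset.sum_mul]
        refine Finset.sum_congr rfl fun i _ => ?_
        rw [Finset.sum_mul]
        refine Finset.sum_congr rfl fun j _ => ?_
        split <;> simp
    _ = ∑ i, ∑ j, ∫ x, (if i < j then
          (pd (Vfield β ε v i) i x * pd (Vfield β ε v j) j x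
            - pd (Vfield β ε v i) j x * pd (Vfield β ε v j) i x) * ψ x else 0) := by
        rw [integral_finset_sum]
        · refine Finset.sum_congr rfl fun i _ => ?_
          rw [integral_finset_sum]
          intro j _
          split
          · exact (key i j).1
          · exact integrable_zero _ _ _
        · intro i _
          apply integrable_finset_sum
          intro j _
          split
          · exact (key i j).1
          · exact integrable_zero _ _ _
    _ = ∑ i, ∑ j, ∫ x, (if i < j then
          (Vfield β ε v i x - c i) *
            (pd (Vfield β ε v j) i x * pd ψ j x - pd (Vfield β ε v j) j x * pd ψ i x)
          else 0) := by
        refine Finset.sum_congr rfl fun i _ => Finset.sum_congr rfl fun j _ => ?_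
        by_cases hij : i < j
        · simp only [if_pos hij]
          exact (key i j).2.2
        · simp only [if_neg hij]
    _ = ∫ x, ∑ i, ∑ j, (if i < j then
          (Vfield β ε v i x - c i) *
            (pd (Vfield β ε v j) i x * pd ψ j x - pd (Vfield β ε v j) j x * pd ψ i x)
          else 0) := by
        rw [integral_finset_sum]
        · refine Finset.sum_congr rfl fun i _ => ?_
          rw [integral_finset_sum]
          intro j _
          split
          · exact (key i j).2.1
          · exact integrable_zero _ _ _
        · intro i _
          apply integrable_finset_sum
          intro j _
          split
          · exact (key i j).2.1
          · exact integrable_zero _ _ _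
    _ = ∫ x in Ω, ∑ i, ∑ j, (if i < j then
          (Vfield β ε v i x - c i) *
            (pd (Vfield β ε v j) i x * pd ψ j x - pd (Vfield β ε v j) j x * pd ψ i x)
          else 0) := by
        symm
        apply setIntegral_eq_integral_of_forall_compl_eq_zero
        intro x hx
        refine Finset.sum_eq_zero fun i _ => Finset.sum_eq_zero fun j _ => ?_
        split
        · rw [hpdψ0 x (hout x hx) i, hpdψ0 x (hout x hx) j]
          ring
        · rfl
end

section
/- Let n ≥ 2, ε > 0 and let p > 1 be a real number. Suppose u is a real-valued function of (x,t) which at a given point is twice differentiable in x, differentiable in t, has a symmetric spatial Hessian, and satisfies u_t = Δu + (p − 2)·Δ∞u / (|Du|² + ε) at that point. Then at that point: (n/2)(p−2)²·|D²u·Du|²/(|Du|²+ε) + [ (p−2) − ((n−2)/2)(p−2)² ]·(Δu)² ≤ ((n−1)/2)(p−2)²·( |D²u|² − (Δu)² ) + (ε/2)(p−2)²·( (Δu)² − |D²u|² )/(|Du|²+ε) + (p−2)·Δu·u_t. -/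
open MeasureTheory Real Set

open Finset in

lemma key_ineq (n : ℕ) (hn : 2 ≤ n) (X : Fin n → Fin n → ℝ) (v : Fin n → ℝ)
    (hsym : ∀ i j, X i j = X j i) :
    (n : ℝ) * (∑ i, (∑ j, X i j * v j) ^ 2) + (∑ i, X i i) ^ 2 * (∑ i, (v i) ^ 2)
      ≤ 2 * (∑ i, X i i) * (∑ i, ∑ j, X i j * v j * v i)
        + ((n : ℝ) - 1) * (∑ i, ∑ j, (X i j) ^ 2) * (∑ i, (v i) ^ 2) := by
  by_cases hG0 : ∑ i, (v i) ^ 2 = 0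
  · have hv : ∀ i, v i = 0 := by
      intro i
      have h := (Finset.sum_eq_zero_iff_of_nonneg (fun i _ => sq_nonneg (v i))).mp hG0 i
        (Finset.mem_univ i)
      exact pow_eq_zero_iff two_ne_zero |>.mp h
    simp [hv]
  · set w : Fin n → ℝ := fun i => ∑ j, X i j * v j with hw
    set G := ∑ i, (v i) ^ 2 with hGdef
    set A := ∑ i, (w i) ^ 2 with hAdef
    set L := ∑ i, X i i with hLdef
    set H := ∑ i, ∑ j, (X i j) ^ 2 with hHdef
    set I := ∑ i, w i * v i with hIdef
    have hGpos : 0 < G := lt_of_le_of_ne (Finset.sum_nonneg fun i _ => sq_nonneg _)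
      (Ne.symm hG0)
    have hN2 : (2:ℝ) ≤ (n:ℝ) := by exact_mod_cast hn
    -- infLap equals I
    have hInf : (∑ i, ∑ j, X i j * v j * v i) = I := by
      rw [hIdef]
      refine Finset.sum_congr rfl fun i _ => ?_
      rw [hw, Finset.sum_mul]
    rw [hInf]
    -- the matrices Z and Q
    set Z : Fin n → Fin n → ℝ := fun i j =>
      G ^ 2 * X i j - G * (w i * v j) - G * (v i * w j) + I * (v i * v j) with hZ
    set Q : Fin n → Fin n → ℝ := fun i j => (if i = j then G else 0) - v i * v j with hQ
    -- separable double sums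
    have hwi : ∀ i, (∑ j, X i j * v j) = w i := fun i => rfl
    have hsep : ∀ f g : Fin n → ℝ, (∑ i, ∑ j, f i * g j) = (∑ i, f i) * (∑ j, g j) :=
      fun f g => (Finset.sum_mul_sum univ univ f g).symm
    -- D identities
    have hD5 : (∑ i, ∑ j, X i j * w i * v j) = A := by
      rw [hAdef]
      refine Finset.sum_congr rfl fun i _ => ?_
      calc ∑ j, X i j * w i * v j = w i * ∑ j, X i j * v j := by
            rw [Finset.mul_sum]; exact Finset.sum_congr rfl fun j _ => by ring
        _ = (w i) ^ 2 := by rw [hwi]; ring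
    have hD6 : (∑ i, ∑ j, X i j * v i * w j) = A := by
      rw [Finset.sum_comm, hAdef]
      refine Finset.sum_congr rfl fun j _ => ?_
      calc ∑ i, X i j * v i * w j = w j * ∑ i, X j i * v i := by
            rw [Finset.mul_sum]
            exact Finset.sum_congr rfl fun i _ => by rw [hsym i j]; ring
        _ = (w j) ^ 2 := by rw [hwi]; ring
    have hD7 : (∑ i, ∑ j, X i j * v i * v j) = I := by
      rw [hIdef]
      refine Finset.sum_congr rfl fun i _ => ?_
      calc ∑ j, X i j * v i * v j = (∑ j, X i j * v j) * v i := by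
            rw [Finset.sum_mul]; exact Finset.sum_congr rfl fun j _ => by ring
        _ = w i * v i := by rw [hwi]
    -- |Z|^2
    have hZ2 : (∑ i, ∑ j, (Z i j) ^ 2) = G ^ 2 * (G ^ 2 * H - 2 * G * A + I ^ 2) := by
      have e : ∀ i j, (Z i j) ^ 2 =
          G ^ 4 * (X i j) ^ 2
          - 2 * G ^ 3 * (X i j * w i * v j)
          - 2 * G ^ 3 * (X i j * v i * w j)
          + 2 * G ^ 2 * I * (X i j * v i * v j)
          + G ^ 2 * ((w i) ^ 2 * (v j) ^ 2)
          + G ^ 2 * ((v i) ^ 2 * (w j) ^ 2)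
          + 2 * G ^ 2 * ((w i * v i) * (w j * v j))
          - 2 * G * I * ((w i * v i) * (v j) ^ 2)
          - 2 * G * I * ((v i) ^ 2 * (w j * v j))
          + I ^ 2 * ((v i) ^ 2 * (v j) ^ 2) := fun i j => by rw [hZ]; ring
      calc (∑ i, ∑ j, (Z i j) ^ 2)
          = ∑ i, ∑ j, (G ^ 4 * (X i j) ^ 2
            - 2 * G ^ 3 * (X i j * w i * v j)
            - 2 * G ^ 3 * (X i j * v i * w j)
            + 2 * G ^ 2 * I * (X i j * v i * v j)
            + G ^ 2 * ((w i) ^ 2 * (v j) ^ 2)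
            + G ^ 2 * ((v i) ^ 2 * (w j) ^ 2)
            + 2 * G ^ 2 * ((w i * v i) * (w j * v j))
            - 2 * G * I * ((w i * v i) * (v j) ^ 2)
            - 2 * G * I * ((v i) ^ 2 * (w j * v j))
            + I ^ 2 * ((v i) ^ 2 * (v j) ^ 2)) :=
            Finset.sum_congr rfl fun i _ => Finset.sum_congr rfl fun j _ => e i j
        _ = G ^ 4 * (∑ i, ∑ j, (X i j) ^ 2)
            - 2 * G ^ 3 * (∑ i, ∑ j, X i j * w i * v j)
            - 2 * G ^ 3 * (∑ i, ∑ j, X i j * v i * w j)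
            + 2 * G ^ 2 * I * (∑ i, ∑ j, X i j * v i * v j)
            + G ^ 2 * (∑ i, ∑ j, (w i) ^ 2 * (v j) ^ 2)
            + G ^ 2 * (∑ i, ∑ j, (v i) ^ 2 * (w j) ^ 2)
            + 2 * G ^ 2 * (∑ i, ∑ j, (w i * v i) * (w j * v j))
            - 2 * G * I * (∑ i, ∑ j, (w i * v i) * (v j) ^ 2)
            - 2 * G * I * (∑ i, ∑ j, (v i) ^ 2 * (w j * v j))
            + I ^ 2 * (∑ i, ∑ j, (v i) ^ 2 * (v j) ^ 2) := by
            simp only [Finset.sum_add_distrib, Finset.sum_sub_distrib, ← Finset.mul_sum]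
        _ = G ^ 2 * (G ^ 2 * H - 2 * G * A + I ^ 2) := by
            rw [hD5, hD6, hD7, hsep (fun i => (w i)^2) (fun j => (v j)^2),
              hsep (fun i => (v i)^2) (fun j => (w j)^2),
              hsep (fun i => w i * v i) (fun j => w j * v j),
              hsep (fun i => w i * v i) (fun j => (v j)^2),
              hsep (fun i => (v i)^2) (fun j => w j * v j),
              hsep (fun i => (v i)^2) (fun j => (v j)^2), ← hGdef, ← hAdef, ← hHdef, ← hIdef]
            ring
    -- extra scalar identities
    have hvw : (∑ i, v i * w i) = I := by
      rw [hIdef]; exact Finset.sum_congr rfl fun i _ => by ring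
    have hvv : (∑ i, v i * v i) = G := by
      rw [hGdef]; exact Finset.sum_congr rfl fun i _ => by ring
    -- diagonal of Z
    have hZd : (∑ i, Z i i) = G ^ 2 * L - G * I := by
      have e : ∀ i, Z i i = G ^ 2 * X i i - G * (w i * v i) - G * (v i * w i)
          + I * (v i * v i) := fun i => by rw [hZ]
      rw [Finset.sum_congr rfl fun i _ => e i]
      simp only [Finset.sum_add_distrib, Finset.sum_sub_distrib, ← Finset.mul_sum]
      rw [← hLdef, ← hIdef, hvw, hvv]; ring
    -- sum Z * Q
    have hZQ : (∑ i, ∑ j, Z i j * Q i j) = G ^ 2 * (G * L - I) := by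
      have e : ∀ i j, Z i j * Q i j = (if i = j then G * Z i j else 0)
          - (G ^ 2 * (X i j * v i * v j) - G * ((w i * v i) * (v j) ^ 2)
            - G * ((v i) ^ 2 * (w j * v j)) + I * ((v i) ^ 2 * (v j) ^ 2)) := by
        intro i j
        by_cases h : i = j
        · subst h; simp only [hQ, eq_self_iff_true, if_true]; ring
        · simp only [hQ, if_neg h]; ring
      calc (∑ i, ∑ j, Z i j * Q i j)
          = ∑ i, ∑ j, ((if i = j then G * Z i j else 0)
            - (G ^ 2 * (X i j * v i * v j) - G * ((w i * v i) * (v j) ^ 2)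
              - G * ((v i) ^ 2 * (w j * v j)) + I * ((v i) ^ 2 * (v j) ^ 2))) :=
            Finset.sum_congr rfl fun i _ => Finset.sum_congr rfl fun j _ => e i j
        _ = (∑ i, G * Z i i)
            - (G ^ 2 * (∑ i, ∑ j, X i j * v i * v j)
              - G * (∑ i, ∑ j, (w i * v i) * (v j) ^ 2)
              - G * (∑ i, ∑ j, (v i) ^ 2 * (w j * v j))
              + I * (∑ i, ∑ j, (v i) ^ 2 * (v j) ^ 2)) := by
            simp only [Finset.sum_add_distrib, Finset.sum_sub_distrib, ← Finset.mul_sum,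
              Finset.sum_ite_eq, Finset.mem_univ, if_true]
        _ = G ^ 2 * (G * L - I) := by
            rw [← Finset.mul_sum, hZd, hD7, hsep (fun i => w i * v i) (fun j => (v j) ^ 2),
              hsep (fun i => (v i) ^ 2) (fun j => w j * v j),
              hsep (fun i => (v i) ^ 2) (fun j => (v j) ^ 2), ← hGdef, ← hIdef]
            ring
    -- sum Q^2
    have hQ2 : (∑ i, ∑ j, (Q i j) ^ 2) = ((n : ℝ) - 1) * G ^ 2 := by
      have e : ∀ i j, (Q i j) ^ 2 = (if i = j then G ^ 2 - 2 * G * (v i * v j) else 0)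
          + (v i) ^ 2 * (v j) ^ 2 := by
        intro i j
        by_cases h : i = j
        · subst h; simp only [hQ, eq_self_iff_true, if_true]; ring
        · simp only [hQ, if_neg h]; ring
      calc (∑ i, ∑ j, (Q i j) ^ 2)
          = ∑ i, ∑ j, ((if i = j then G ^ 2 - 2 * G * (v i * v j) else 0)
              + (v i) ^ 2 * (v j) ^ 2) :=
            Finset.sum_congr rfl fun i _ => Finset.sum_congr rfl fun j _ => e i j
        _ = (∑ i, (G ^ 2 - 2 * G * (v i * v i)))
            + (∑ i, ∑ j, (v i) ^ 2 * (v j) ^ 2) := by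
            simp only [Finset.sum_add_distrib, Finset.sum_ite_eq, Finset.mem_univ, if_true]
        _ = ((n : ℝ) - 1) * G ^ 2 := by
            rw [Finset.sum_sub_distrib, Finset.sum_const, ← Finset.mul_sum, hvv,
              hsep (fun i => (v i) ^ 2) (fun j => (v j) ^ 2), ← hGdef]
            simp [Finset.card_univ]
            ring
    -- Cauchy-Schwarz
    have hcs := Finset.sum_mul_sq_le_sq_mul_sq Finset.univ
      (fun p : Fin n × Fin n => Z p.1 p.2) (fun p : Fin n × Fin n => Q p.1 p.2)
    simp only [Fintype.sum_prod_type] at hcs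
    rw [hZ2, hZQ, hQ2] at hcs
    have h1 : (G * L - I) ^ 2 ≤ ((n : ℝ) - 1) * (G ^ 2 * H - 2 * G * A + I ^ 2) := by
      have hG4 : (0 : ℝ) < G ^ 4 := by positivity
      have h2 : G ^ 4 * (G * L - I) ^ 2
          ≤ G ^ 4 * (((n : ℝ) - 1) * (G ^ 2 * H - 2 * G * A + I ^ 2)) := by
        calc G ^ 4 * (G * L - I) ^ 2 = (G ^ 2 * (G * L - I)) ^ 2 := by ring
          _ ≤ G ^ 2 * (G ^ 2 * H - 2 * G * A + I ^ 2) * (((n : ℝ) - 1) * G ^ 2) := hcs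
          _ = G ^ 4 * (((n : ℝ) - 1) * (G ^ 2 * H - 2 * G * A + I ^ 2)) := by ring
      exact le_of_mul_le_mul_left h2 hG4
    have hAG : I ^ 2 ≤ A * G := by
      have h := Finset.sum_mul_sq_le_sq_mul_sq Finset.univ w v
      rw [← hIdef, ← hAdef, ← hGdef] at h
      exact h
    have hfact : 0 ≤ ((n : ℝ) - 2) * (A * G - I ^ 2) :=
      mul_nonneg (by linarith) (by linarith)
    have hmain : 0 ≤ G * ((2 * L * I + ((n : ℝ) - 1) * H * G) - ((n : ℝ) * A + L ^ 2 * G)) := by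
      have hid : G * ((2 * L * I + ((n : ℝ) - 1) * H * G) - ((n : ℝ) * A + L ^ 2 * G))
          = ((n : ℝ) - 2) * (A * G - I ^ 2)
            + (((n : ℝ) - 1) * (G ^ 2 * H - 2 * G * A + I ^ 2) - (G * L - I) ^ 2) := by ring
      rw [hid]; linarith
    have hmul : G * 0 ≤ G * ((2 * L * I + ((n : ℝ) - 1) * H * G) - ((n : ℝ) * A + L ^ 2 * G)) := by
      linarith
    have hT := le_of_mul_le_mul_left hmul hGpos
    linarith


lemma final_ineq (N ε A G L I H c : ℝ) (hε : 0 < ε) (hG : 0 ≤ G) (hH : 0 ≤ H) (hN : 2 ≤ N)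
    (key : N * A + L ^ 2 * G ≤ 2 * L * I + (N - 1) * H * G) :
    N / 2 * c ^ 2 * A / (G + ε) + (c - (N - 2) / 2 * c ^ 2) * L ^ 2
      ≤ (N - 1) / 2 * c ^ 2 * (H - L ^ 2) + ε / 2 * c ^ 2 * (L ^ 2 - H) / (G + ε)
        + c * L * (L + c * I / (G + ε)) := by
  have hD : (0:ℝ) < G + ε := by linarith
  rw [← sub_nonneg]
  have hrw : (N - 1) / 2 * c ^ 2 * (H - L ^ 2) + ε / 2 * c ^ 2 * (L ^ 2 - H) / (G + ε)
        + c * L * (L + c * I / (G + ε))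
      - (N / 2 * c ^ 2 * A / (G + ε) + (c - (N - 2) / 2 * c ^ 2) * L ^ 2)
      = c ^ 2 * ((2 * L * I + (N - 1) * H * G - (N * A + L ^ 2 * G)) + (N - 2) * ε * H)
          / (2 * (G + ε)) := by
    field_simp
    ring
  rw [hrw]
  apply div_nonneg _ (by linarith)
  apply mul_nonneg (sq_nonneg c)
  have h2 : 0 ≤ (N - 2) * ε * H := mul_nonneg (mul_nonneg (by linarith) hε.le) hH
  linarith

theorem pointwise_inequality_3_2
    (n : ℕ) (hn : 2 ≤ n) (ε : ℝ) (hε : 0 < ε) (p : ℝ) (hp : 1 < p)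
    (u : (Fin n → ℝ) → ℝ → ℝ) (x : Fin n → ℝ) (t : ℝ)
    (hx1 : DifferentiableAt ℝ (fun y => u y t) x)
    (hx2 : ∀ j, DifferentiableAt ℝ (pd (fun y => u y t) j) x)
    (ht : DifferentiableAt ℝ (u x) t)
    (hsym : ∀ i j, hess (fun y => u y t) i j x = hess (fun y => u y t) j i x)
    (heq : tderiv u x t = lap (fun y => u y t) x +
        (p - 2) * infLap (fun y => u y t) x / (gradSq (fun y => u y t) x + ε)) :
    (n / 2 : ℝ) * (p - 2) ^ 2 * hessGradSq (fun y => u y t) x / (gradSq (fun y => u y t) x + ε)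
        + ((p - 2) - ((n : ℝ) - 2) / 2 * (p - 2) ^ 2) * (lap (fun y => u y t) x) ^ 2
      ≤ ((n : ℝ) - 1) / 2 * (p - 2) ^ 2 *
          (hessSq (fun y => u y t) x - (lap (fun y => u y t) x) ^ 2)
        + ε / 2 * (p - 2) ^ 2 *
            ((lap (fun y => u y t) x) ^ 2 - hessSq (fun y => u y t) x) /
            (gradSq (fun y => u y t) x + ε)
        + (p - 2) * lap (fun y => u y t) x * tderiv u x t := by
  have hG : 0 ≤ gradSq (fun y => u y t) x := by
    unfold gradSq; positivity
  have hH : 0 ≤ hessSq (fun y => u y t) x := by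
    unfold hessSq; positivity
  have key : (n : ℝ) * hessGradSq (fun y => u y t) x
      + (lap (fun y => u y t) x) ^ 2 * gradSq (fun y => u y t) x
      ≤ 2 * lap (fun y => u y t) x * infLap (fun y => u y t) x
        + ((n : ℝ) - 1) * hessSq (fun y => u y t) x * gradSq (fun y => u y t) x := by
    have h := key_ineq n hn (fun i j => hess (fun y => u y t) i j x)
      (fun j => pd (fun y => u y t) j x) hsym
    simpa [hessGradSq, gradSq, lap, hessSq, infLap] using h
  rw [heq]
  exact final_ineq (n : ℝ) ε (hessGradSq (fun y => u y t) x) (gradSq (fun y => u y t) x)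
    (lap (fun y => u y t) x) (infLap (fun y => u y t) x) (hessSq (fun y => u y t) x)
    (p - 2) hε hG hH (by exact_mod_cast hn) key
end

section
/- Let n ≥ 2, ε > 0 and let p > 1 be a real number. Suppose u is a real-valued function of (x,t) which at a given point is twice differentiable in x, differentiable in t, has a symmetric spatial Hessian, and satisfies u_t = Δu + (p − 2)·Δ∞u / (|Du|² + ε) at that point. Then at that point: [ n/2 + (p−2) − ((n−2)/2)(p−2)² ]·|D²u|² + (n/2)·(u_t)² ≤ [ n/2 + (p−2) + (1/2)(p−2)² ]·( |D²u|² − (Δu)² ) + (ε/2)(p−2)²·( (Δu)² − |D²u|² )/(|Du|²+ε) + (p−2+n)·Δu·u_t. -/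
open MeasureTheory Real Set

/-! With `A = D²u`, `q = Du` and `G = |q|²`, the fundamental inequality
`(G tr A - ⟨Aq, q⟩)² + (n - 1) ⟨Aq, q⟩² ≤ (n - 1) G² |A|²` is Bessel's inequality for `A` against
the span of `I` and `q qᵀ` in the Frobenius inner product, i.e. the nonnegativity of a `3 × 3`
Gram determinant. It says that
`F(s) = (n - 2)|A|² s² + 2 tr A ⟨Aq, q⟩ s + G s (|A|² - (tr A)²) - n ⟨Aq, q⟩²` is nonnegative at
`s = G`, hence for all `s ≥ G`. Eliminating `u_t` with the equation, the difference of the two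
sides of (3.3) is `(p - 2)² F(G + ε) / (2 (G + ε)²)`. -/

open Matrix Finset

theorem le_det_gram_pair_mul_inner_self {E : Type*} [NormedAddCommGroup E] [InnerProductSpace ℝ E]
    (x u v : E) :
    inner ℝ v v * inner ℝ x u ^ 2 - 2 * inner ℝ u v * inner ℝ x u * inner ℝ x v
        + inner ℝ u u * inner ℝ x v ^ 2
      ≤ (inner ℝ u u * inner ℝ v v - inner ℝ u v ^ 2) * inner ℝ x x := by
  have h := (posSemidef_gram ℝ ![x, u, v]).det_nonneg
  simp only [det_fin_three, gram, of_apply, cons_val_zero, cons_val_one, cons_val_two,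
    Nat.succ_eq_add_one, Nat.reduceAdd, head_cons, tail_cons] at h
  rw [real_inner_comm x u, real_inner_comm x v, real_inner_comm u v] at h
  linarith

namespace Matrix
variable {ι : Type*} [Fintype ι]

noncomputable def flatten (A : Matrix ι ι ℝ) : EuclideanSpace ℝ (ι × ι) :=
  WithLp.toLp 2 fun p => A p.1 p.2

theorem inner_flatten (A B : Matrix ι ι ℝ) :
    inner ℝ A.flatten B.flatten = ∑ i, ∑ j, A i j * B i j := by
  simp [flatten, PiLp.inner_apply, Fintype.sum_prod_type, mul_comm]

theorem sq_dotProduct_mul_trace_sub_quadForm_add_le (A : Matrix ι ι ℝ) (q : ι → ℝ) :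
    (q ⬝ᵥ q * A.trace - q ⬝ᵥ A *ᵥ q) ^ 2 + (Fintype.card ι - 1) * (q ⬝ᵥ A *ᵥ q) ^ 2
      ≤ (Fintype.card ι - 1) * (q ⬝ᵥ q) ^ 2 * ∑ i, ∑ j, A i j ^ 2 := by
  classical
  have h := le_det_gram_pair_mul_inner_self A.flatten (1 : Matrix ι ι ℝ).flatten
    (vecMulVec q q).flatten
  have hAI : inner ℝ A.flatten (1 : Matrix ι ι ℝ).flatten = A.trace := by
    simp [inner_flatten, one_apply, trace]
  have hII : inner ℝ (1 : Matrix ι ι ℝ).flatten (1 : Matrix ι ι ℝ).flatten = Fintype.card ι := by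
    rw [inner_flatten]; simp [one_apply]
  have hIQ : inner ℝ (1 : Matrix ι ι ℝ).flatten (vecMulVec q q).flatten = q ⬝ᵥ q := by
    simp [inner_flatten, one_apply, vecMulVec_apply, dotProduct]
  have hQQ : inner ℝ (vecMulVec q q).flatten (vecMulVec q q).flatten = (q ⬝ᵥ q) ^ 2 := by
    rw [inner_flatten, sq, dotProduct, sum_mul_sum]
    simp only [vecMulVec_apply]
    exact sum_congr rfl fun i _ => sum_congr rfl fun j _ => by ring
  have hAQ : inner ℝ A.flatten (vecMulVec q q).flatten = q ⬝ᵥ A *ᵥ q := by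
    simp only [inner_flatten, vecMulVec_apply, dotProduct, mulVec, mul_sum]
    exact sum_congr rfl fun i _ => sum_congr rfl fun j _ => by ring
  have hAA : inner ℝ A.flatten A.flatten = ∑ i, ∑ j, A i j ^ 2 := by
    simp only [inner_flatten, sq]
  rw [hAI, hII, hIQ, hQQ, hAQ, hAA] at h
  linear_combination h

theorem card_mul_sq_quadForm_le (A : Matrix ι ι ℝ) (q : ι → ℝ) (hι : 2 ≤ Fintype.card ι) {s : ℝ}
    (hs : q ⬝ᵥ q ≤ s) :
    Fintype.card ι * (q ⬝ᵥ A *ᵥ q) ^ 2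
      ≤ (Fintype.card ι - 2) * (∑ i, ∑ j, A i j ^ 2) * s ^ 2 + 2 * A.trace * (q ⬝ᵥ A *ᵥ q) * s
        + q ⬝ᵥ q * s * (∑ i, ∑ j, A i j ^ 2 - A.trace ^ 2) := by
  have hN : (2 : ℝ) ≤ Fintype.card ι := by exact_mod_cast hι
  have hH : 0 ≤ ∑ i, ∑ j, A i j ^ 2 := by positivity
  have hG : 0 ≤ q ⬝ᵥ q := sum_nonneg fun i _ => mul_self_nonneg (q i)
  rcases hG.eq_or_lt with hG | hG
  · obtain rfl : q = 0 := dotProduct_self_eq_zero.mp hG.symm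
    simp only [zero_dotProduct, zero_mul, mul_zero, add_zero, zero_pow two_ne_zero]
    have : 0 ≤ Fintype.card ι - (2 : ℝ) := by linarith
    positivity
  · have hfund := sq_dotProduct_mul_trace_sub_quadForm_add_le A q
    set G := q ⬝ᵥ q
    set a := q ⬝ᵥ A *ᵥ q
    set L := A.trace
    set N : ℝ := (Fintype.card ι : ℝ)
    set H := ∑ i, ∑ j, A i j ^ 2
    have hFG : 0 ≤ (N - 1) * G ^ 2 * H - (G * L - a) ^ 2 - (N - 1) * a ^ 2 := by linarith
    have hN2 : 0 ≤ N - 2 := by linarith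
    have hsG : 0 ≤ s - G := by linarith
    have hs0 : 0 < s := by linarith
    have hGF : 0 ≤ G * ((N - 2) * H * s ^ 2 + 2 * L * a * s + G * s * (H - L ^ 2) - N * a ^ 2) := by
      rw [show G * ((N - 2) * H * s ^ 2 + 2 * L * a * s + G * s * (H - L ^ 2) - N * a ^ 2)
          = s * ((N - 1) * G ^ 2 * H - (G * L - a) ^ 2 - (N - 1) * a ^ 2)
            + (s - G) * ((N - 2) * H * G * s + N * a ^ 2) by ring]
      positivity
    linarith [(mul_nonneg_iff_of_pos_left hG).mp hGF]
end Matrix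

theorem card_mul_infLap_sq_le {n : ℕ} (hn : 2 ≤ n) (f : (Fin n → ℝ) → ℝ) (x : Fin n → ℝ)
    {s : ℝ} (hs : gradSq f x ≤ s) :
    n * infLap f x ^ 2
      ≤ (n - 2) * hessSq f x * s ^ 2 + 2 * lap f x * infLap f x * s
        + gradSq f x * s * (hessSq f x - lap f x ^ 2) := by
  have hgrad : gradSq f x = (fun i => pd f i x) ⬝ᵥ (fun i => pd f i x) := by
    simp only [gradSq, dotProduct, sq]
  have hinf :
      infLap f x = (fun i => pd f i x) ⬝ᵥ (of fun i j => hess f i j x) *ᵥ (fun i => pd f i x) := by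
    simp only [infLap, dotProduct, mulVec, of_apply, mul_sum]
    exact sum_congr rfl fun i _ => sum_congr rfl fun j _ => by ring
  have h := (of fun i j => hess f i j x).card_mul_sq_quadForm_le (fun i => pd f i x)
    (by simpa using hn) (hgrad ▸ hs)
  simpa only [Fintype.card_fin, ← hgrad, ← hinf, trace, Matrix.diag, of_apply, lap, hessSq] using h

theorem pointwise_inequality_3_3_general
    (n : ℕ) (hn : 2 ≤ n) (ε : ℝ) (hε : 0 < ε) (p : ℝ)
    (u : (Fin n → ℝ) → ℝ → ℝ) (x : Fin n → ℝ) (t : ℝ)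
    (heq : tderiv u x t = lap (fun y => u y t) x +
        (p - 2) * infLap (fun y => u y t) x / (gradSq (fun y => u y t) x + ε)) :
    ((n : ℝ) / 2 + (p - 2) - ((n : ℝ) - 2) / 2 * (p - 2) ^ 2) * hessSq (fun y => u y t) x
        + (n : ℝ) / 2 * (tderiv u x t) ^ 2
      ≤ ((n : ℝ) / 2 + (p - 2) + (1 / 2) * (p - 2) ^ 2) *
          (hessSq (fun y => u y t) x - (lap (fun y => u y t) x) ^ 2)
        + ε / 2 * (p - 2) ^ 2 *
            ((lap (fun y => u y t) x) ^ 2 - hessSq (fun y => u y t) x) /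
            (gradSq (fun y => u y t) x + ε)
        + (p - 2 + n) * lap (fun y => u y t) x * tderiv u x t := by
  have hG : 0 ≤ gradSq (fun y => u y t) x := sum_nonneg fun i _ => sq_nonneg _
  have hkey := card_mul_infLap_sq_le hn (fun y => u y t) x (le_add_of_nonneg_right hε.le)
  set G := gradSq (fun y => u y t) x
  set L := lap (fun y => u y t) x
  set a := infLap (fun y => u y t) x
  set H := hessSq (fun y => u y t) x
  have hs : 0 < G + ε := by positivity
  suffices 0 ≤ (p - 2) ^ 2 * ((n - 2) * H * (G + ε) ^ 2 + 2 * L * a * (G + ε)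
      + G * (G + ε) * (H - L ^ 2) - n * a ^ 2) / (2 * (G + ε) ^ 2) by
    rw [heq, ← sub_nonneg]
    convert this using 1
    field_simp
    ring
  have := sub_nonneg.mpr hkey
  positivity

theorem pointwise_inequality_3_3
    (n : ℕ) (hn : 2 ≤ n) (ε : ℝ) (hε : 0 < ε) (p : ℝ) (hp : 1 < p)
    (u : (Fin n → ℝ) → ℝ → ℝ) (x : Fin n → ℝ) (t : ℝ)
    (hx1 : DifferentiableAt ℝ (fun y => u y t) x)
    (hx2 : ∀ j, DifferentiableAt ℝ (pd (fun y => u y t) j) x)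
    (ht : DifferentiableAt ℝ (u x) t)
    (hsym : ∀ i j, hess (fun y => u y t) i j x = hess (fun y => u y t) j i x)
    (heq : tderiv u x t = lap (fun y => u y t) x +
        (p - 2) * infLap (fun y => u y t) x / (gradSq (fun y => u y t) x + ε)) :
    ((n : ℝ) / 2 + (p - 2) - ((n : ℝ) - 2) / 2 * (p - 2) ^ 2) * hessSq (fun y => u y t) x
        + (n : ℝ) / 2 * (tderiv u x t) ^ 2
      ≤ ((n : ℝ) / 2 + (p - 2) + (1 / 2) * (p - 2) ^ 2) *
          (hessSq (fun y => u y t) x - (lap (fun y => u y t) x) ^ 2)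
        + ε / 2 * (p - 2) ^ 2 *
            ((lap (fun y => u y t) x) ^ 2 - hessSq (fun y => u y t) x) /
            (gradSq (fun y => u y t) x + ε)
        + (p - 2 + n) * lap (fun y => u y t) x * tderiv u x t :=
  pointwise_inequality_3_3_general n hn ε hε p u x t heq
end

section
/- Let n ≥ 2, ε > 0 and let p > 1 be a real number. Suppose u is a real-valued function of (x,t) which at a given point is twice differentiable in x, differentiable in t, and satisfies u_t = Δu + (p − 2)·Δ∞u / (|Du|² + ε) at that point. Then at that point: ε·(p−2)²·( Δu·Δ∞u − |D²u·Du|² ) / (|Du|²+ε)² ≤ ( (p−2)² / (4(p−1)) )·(u_t)². -/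
open MeasureTheory Real Set

theorem pointwise_epsilon_term_bound
    (n : ℕ) (hn : 2 ≤ n) (ε : ℝ) (hε : 0 < ε) (p : ℝ) (hp : 1 < p)
    (u : (Fin n → ℝ) → ℝ → ℝ) (x : Fin n → ℝ) (t : ℝ)
    (hx1 : DifferentiableAt ℝ (fun y => u y t) x)
    (hx2 : ∀ j, DifferentiableAt ℝ (pd (fun y => u y t) j) x)
    (ht : DifferentiableAt ℝ (u x) t)
    (heq : tderiv u x t = lap (fun y => u y t) x +
        (p - 2) * infLap (fun y => u y t) x / (gradSq (fun y => u y t) x + ε)) :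
    ε * (p - 2) ^ 2 *
        (lap (fun y => u y t) x * infLap (fun y => u y t) x - hessGradSq (fun y => u y t) x) /
        (gradSq (fun y => u y t) x + ε) ^ 2
      ≤ (p - 2) ^ 2 / (4 * (p - 1)) * (tderiv u x t) ^ 2 := by
  classical
  set f : (Fin n → ℝ) → ℝ := fun y => u y t with hf
  have hG : 0 ≤ gradSq f x := Finset.sum_nonneg fun i _ => sq_nonneg _
  have hH : 0 ≤ hessGradSq f x := Finset.sum_nonneg fun i _ => sq_nonneg _
  set G := gradSq f x with hGdef
  set L := lap f x with hLdef
  set I := infLap f x with hIdef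
  set H := hessGradSq f x with hHdef
  set T := tderiv u x t with hTdef
  set S := G + ε with hSdef
  have hS : 0 < S := by positivity
  have hεS : ε ≤ S := by simp [hSdef]; linarith
  -- Cauchy-Schwarz : I^2 ≤ H * G
  have hIeq : I = ∑ i, (∑ j, hess f i j x * pd f j x) * pd f i x := by
    simp [hIdef, infLap, Finset.sum_mul]
  have hCS : I ^ 2 ≤ H * G := by
    rw [hIeq, hHdef, hGdef]
    exact Finset.sum_mul_sq_le_sq_mul_sq _ _ _
  have hCS' : I ^ 2 ≤ H * S := by nlinarith [mul_nonneg hH hε.le]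
  have hTS : T * S = L * S + (p - 2) * I := by
    rw [heq]; field_simp
  have hp1 : (0:ℝ) < p - 1 := by linarith
  rw [div_le_iff₀ (by positivity : (0:ℝ) < S ^ 2)]
  have key : ε * (p - 2) ^ 2 * (L * I - H) * (4 * (p - 1)) ≤ (p - 2) ^ 2 * (L * S + (p - 2) * I) ^ 2 := by
    rcases le_or_gt (L * I - H) 0 with hc | hc
    · nlinarith [mul_nonneg (sq_nonneg (p-2)) (sq_nonneg (L * S + (p - 2) * I)),
        mul_nonneg (mul_nonneg hε.le (sq_nonneg (p-2))) (neg_nonneg.2 hc),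
        mul_nonneg hp1.le (mul_nonneg (mul_nonneg hε.le (sq_nonneg (p-2))) (neg_nonneg.2 hc))]
    · have h1 : 0 ≤ (p - 2) ^ 2 * ((S - ε) * (L * I - H)) :=
        mul_nonneg (sq_nonneg _) (mul_nonneg (by linarith) hc.le)
      have h2 : 0 ≤ (p - 2) ^ 2 * (H * S - I ^ 2) :=
        mul_nonneg (sq_nonneg _) (by linarith)
      nlinarith [sq_nonneg ((p-2) * (L * S - p * I)), mul_nonneg hp1.le h1, mul_nonneg hp1.le h2]
  calc ε * (p - 2) ^ 2 * (L * I - H)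
      ≤ (p - 2) ^ 2 * (L * S + (p - 2) * I) ^ 2 / (4 * (p - 1)) := by
        rw [le_div_iff₀ (by linarith : (0:ℝ) < 4 * (p - 1))]; exact key
    _ = (p - 2) ^ 2 / (4 * (p - 1)) * (T * S) ^ 2 := by rw [hTS]; ring
    _ = (p - 2) ^ 2 / (4 * (p - 1)) * T ^ 2 * S ^ 2 := by ring
end
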